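/- For every n ≥ 1, the word obtained by concatenating the symbols of all permutations generated by cyclic shift in order of rank is a palindrome: the list L = List.flatMap (fun α => w(n,α)) (List.range n!) satisfies List.reverse L = L. -/
import Mathlib


/-- The rank-to-permutation map of the cyclic-shift generation order. -/
def w : ℕ → ℕ → List ℕ
  | 0, _ => []
  | 1, _ => [0]
  | n + 2, α => List.rotate (w (n + 1) (α / (n + 2)) ++ [n + 1]) (α % (n + 2))

lemma w_length : ∀ n α, (w n α).length = n
  | 0, _ => rfl
  | 1, _ => rfl
  | n + 2, α => by
    simp [w, w_length (n + 1) (α / (n + 2))]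

lemma rotate_last (l : List ℕ) (a : ℕ) : (l ++ [a]).rotate l.length = a :: l := by
  rw [List.rotate_eq_drop_append_take (by simp)]
  simp [List.drop_left, List.take_left]

lemma w_reverse : ∀ n α, α < (n + 1).factorial →
    (w (n + 1) α).reverse = w (n + 1) ((n + 1).factorial - 1 - α)
  | 0, α, h => rfl
  | n + 1, α, h => by
    have hF : 1 ≤ (n + 1).factorial := Nat.one_le_iff_ne_zero.2 (Nat.factorial_ne_zero _)
    set F := (n + 1).factorial with hFdef
    have hfac : (n + 2).factorial = (n + 2) * F := by
      simp [Nat.factorial_succ, hFdef]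
    have hq : α / (n + 2) < F := by
      rw [Nat.div_lt_iff_lt_mul (by omega)]
      calc α < (n + 2) * F := by rwa [hfac] at h
        _ = F * (n + 2) := by ring
    have hr : α % (n + 2) < n + 2 := Nat.mod_lt _ (by omega)
    set q := α / (n + 2) with hqdef
    set r := α % (n + 2) with hrdef
    have hα : α = (n + 2) * q + r := by
      rw [hqdef, hrdef]
      exact (Nat.div_add_mod α (n + 2)).symm
    -- β decomposition
    have hC : (n + 2) * (q + 1) = (n + 2) * q + (n + 2) := by ring
    have hAB : (n + 2) * (q + 1) ≤ (n + 2) * F :=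
      Nat.mul_le_mul_left _ (by omega)
    have hβ : (n + 2).factorial - 1 - α = (n + 1 - r) + (n + 2) * (F - 1 - q) := by
      have hmul : (n + 2) * (F - 1 - q) = (n + 2) * F - (n + 2) * (q + 1) := by
        rw [show F - 1 - q = F - (q + 1) by omega, Nat.mul_sub]
      rw [hfac, hmul]
      omega
    have hβdiv : ((n + 2).factorial - 1 - α) / (n + 2) = F - 1 - q := by
      rw [hβ, Nat.add_mul_div_left _ _ (show 0 < n + 2 by omega),
        Nat.div_eq_of_lt (by omega)]
      omega
    have hβmod : ((n + 2).factorial - 1 - α) % (n + 2) = n + 1 - r := by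
      rw [hβ, Nat.add_mul_mod_self_left, Nat.mod_eq_of_lt (by omega)]
    have IH := w_reverse n q hq
    -- unfold both sides
    show (List.rotate (w (n + 1) q ++ [n + 1]) r).reverse =
      List.rotate (w (n + 1) (((n + 2).factorial - 1 - α) / (n + 2)) ++ [n + 1])
        (((n + 2).factorial - 1 - α) % (n + 2))
    rw [hβdiv, hβmod, ← IH]
    have hlen : (w (n + 1) q ++ [n + 1]).length = n + 2 := by
      simp [w_length]
    rw [List.reverse_rotate, hlen, Nat.mod_eq_of_lt hr]
    have hrev : (w (n + 1) q ++ [n + 1]).reverse =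
        ((w (n + 1) q).reverse ++ [n + 1]).rotate (n + 1) := by
      have := rotate_last (w (n + 1) q).reverse (n + 1)
      rw [show ((w (n + 1) q).reverse).length = n + 1 by simp [w_length]] at this
      rw [this]
      simp
    rw [hrev, List.rotate_rotate]
    have hlen2 : ((w (n + 1) q).reverse ++ [n + 1]).length = n + 2 := by
      simp [w_length]
    rw [show (n + 1) + (n + 2 - r) = (n + 2) + (n + 1 - r) by omega,
      ← List.rotate_rotate, ← hlen2, List.rotate_length]

theorem palindrome_word (n : ℕ) (hn : 1 ≤ n) :
    ((List.range n.factorial).flatMap (fun α => w n α)).reverse =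
      (List.range n.factorial).flatMap (fun α => w n α) := by
  obtain ⟨m, rfl⟩ : ∃ m, n = m + 1 := ⟨n - 1, by omega⟩
  set N := (m + 1).factorial with hN
  rw [List.reverse_flatMap, List.range_eq_range', List.reverse_range',
    List.flatMap_map, ← List.range_eq_range']
  apply List.flatMap_congr
  intro α hα
  rw [List.mem_range] at hα
  have h1 : N - 1 - α < N := by
    have : 1 ≤ N := Nat.one_le_iff_ne_zero.2 (Nat.factorial_ne_zero _)
    omega
  have := w_reverse m (N - 1 - α) h1
  have h2 : N - 1 - (N - 1 - α) = α := by omega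
  rw [← hN, h2] at this
  simp only [Function.comp]
  rw [show 0 + N - 1 - α = N - 1 - α by omega, this]
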